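/- Let q be a real number with 0 < q < 1, let n ≥ 1 be an integer and x > 0 a real number. Then for every complex number s, the double q-zeta function satisfies the distribution relation [n]_q^{−s} · Σ_{m=0}^{n−1} Σ_{k=0}^{n−1} ζ_{q^n,2}( s , x + (k+m)/n ) = ζ_{q,2}(s, n·x), where on the left the double q-zeta function is formed with q replaced by q^n. -/

import Mathlib

/-!
Split the lattice `ℕ × ℕ` into the `n²` residue classes `(n p₁ + m, n p₂ + k)`. On the class
`(m, k)` the exponent of `ζ_{q,2}(s, n x)` is `n (p₁ + p₂ + x + (k + m)/n)`, and the identities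
`q^{n z} = (q^n)^z` and `[n z]_q = [n]_q [z]_{q^n}` turn each term into `[n]_q^{-s}` times the
corresponding term of `ζ_{q^n,2}(s, x + (k + m)/n)`. Absolute convergence, needed to regroup,
holds because `[z]_Q` stays in `[[x]_Q, 1/(1 - Q)]` for `z ≥ x`, so the denominators are bounded
away from `0` and the numerators decay geometrically.
-/

open Finset

/-- The q-analogue `[z]_q = (1 - q^z)/(1 - q)` for a real exponent `z`. -/
noncomputable def qn (q z : ℝ) : ℝ := (1 - q ^ z) / (1 - q)

/-- The complex power `r^s := exp(s·log r)` of a positive real `r` (real logarithm). -/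
noncomputable def rpowC (r : ℝ) (s : ℂ) : ℂ := Complex.exp (s * (Real.log r : ℂ))

/-- The double q-zeta function (with base `Q`)
`ζ_{Q,2}(s,x) = Σ_{n₁,n₂ ≥ 0} Q^{n₁+n₂+x}/[n₁+n₂+x]_Q^s`. -/
noncomputable def zeta2 (Q : ℝ) (s : ℂ) (x : ℝ) : ℂ :=
  ∑' p : ℕ × ℕ, ((Q ^ ((p.1 : ℝ) + (p.2 : ℝ) + x) : ℝ) : ℂ)
    / rpowC (qn Q ((p.1 : ℝ) + (p.2 : ℝ) + x)) s

section QNumber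

variable {q : ℝ}

lemma qn_pos (hq0 : 0 ≤ q) (hq1 : q < 1) {z : ℝ} (hz : 0 < z) : 0 < qn q z :=
  div_pos (sub_pos.mpr (Real.rpow_lt_one hq0 hq1 hz)) (sub_pos.mpr hq1)

lemma monotone_qn (hq0 : 0 < q) (hq1 : q < 1) : Monotone (qn q) := fun _ _ h =>
  div_le_div_of_nonneg_right
    (sub_le_sub_left (Real.rpow_le_rpow_of_exponent_ge hq0 hq1.le h) 1) (sub_pos.mpr hq1).le

lemma qn_le_inv_one_sub (hq0 : 0 ≤ q) (hq1 : q < 1) (z : ℝ) : qn q z ≤ (1 - q)⁻¹ := by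
  rw [qn, div_eq_mul_inv]
  exact mul_le_of_le_one_left (inv_pos.mpr (sub_pos.mpr hq1)).le
    (sub_le_self 1 (Real.rpow_nonneg hq0 z))

lemma qn_natCast_mul (hq0 : 0 ≤ q) (hq1 : q ≠ 1) (n : ℕ) (z : ℝ) :
    qn q (n * z) = qn q n * qn (q ^ n) z := by
  rcases eq_or_ne n 0 with rfl | hn
  · simp [qn]
  have hqn : q ^ n ≠ 1 := fun h => hq1 ((pow_eq_one_iff_of_nonneg hq0 hn).mp h)
  rw [qn, qn, qn, Real.rpow_natCast_mul hq0, Real.rpow_natCast]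
  field_simp [sub_ne_zero.mpr hq1.symm, sub_ne_zero.mpr hqn.symm]

lemma abs_log_qn_le (hq0 : 0 < q) (hq1 : q < 1) {x z : ℝ} (hx : 0 < x) (hxz : x ≤ z) :
    |Real.log (qn q z)| ≤ max |Real.log (qn q x)| |Real.log (1 - q)⁻¹| :=
  abs_le_max_abs_abs (Real.log_le_log (qn_pos hq0.le hq1 hx) (monotone_qn hq0 hq1 hxz))
    (Real.log_le_log (qn_pos hq0.le hq1 (hx.trans_le hxz)) (qn_le_inv_one_sub hq0.le hq1 z))

end QNumber

lemma rpowC_mul {a b : ℝ} (ha : a ≠ 0) (hb : b ≠ 0) (s : ℂ) :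
    rpowC (a * b) s = rpowC a s * rpowC b s := by
  rw [rpowC, rpowC, rpowC, Real.log_mul ha hb, ← Complex.exp_add]
  push_cast
  ring_nf

lemma rpowC_neg (r : ℝ) (s : ℂ) : rpowC r (-s) = (rpowC r s)⁻¹ := by
  rw [rpowC, rpowC, neg_mul, Complex.exp_neg]

lemma norm_rpowC (r : ℝ) (s : ℂ) : ‖rpowC r s‖ = Real.exp (s.re * Real.log r) := by
  rw [rpowC, Complex.norm_exp, Complex.re_mul_ofReal]

noncomputable def qzetaTerm (Q : ℝ) (s : ℂ) (z : ℝ) : ℂ :=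
  ((Q ^ z : ℝ) : ℂ) / rpowC (qn Q z) s

lemma zeta2_eq_tsum_qzetaTerm (Q : ℝ) (s : ℂ) (x : ℝ) :
    zeta2 Q s x = ∑' p : ℕ × ℕ, qzetaTerm Q s (p.1 + p.2 + x) := rfl

lemma qzetaTerm_natCast_mul {q : ℝ} (hq0 : 0 < q) (hq1 : q < 1) {n : ℕ} (hn : n ≠ 0) (s : ℂ)
    {z : ℝ} (hz : 0 < z) :
    qzetaTerm q s (n * z) = rpowC (qn q n) (-s) * qzetaTerm (q ^ n) s z := by
  have hqn : qn q n ≠ 0 := (qn_pos hq0.le hq1 (Nat.cast_pos.mpr (Nat.pos_of_ne_zero hn))).ne'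
  have hqnz : qn (q ^ n) z ≠ 0 :=
    (qn_pos (pow_nonneg hq0.le n) (pow_lt_one₀ hq0.le hq1 hn) hz).ne'
  rw [qzetaTerm, qzetaTerm, qn_natCast_mul hq0.le hq1.ne n, rpowC_mul hqn hqnz,
    Real.rpow_natCast_mul hq0.le, rpowC_neg]
  ring

lemma exists_norm_qzetaTerm_le {Q : ℝ} (hQ0 : 0 < Q) (hQ1 : Q < 1) (s : ℂ) {x : ℝ}
    (hx : 0 < x) : ∃ C, ∀ z, x ≤ z → ‖qzetaTerm Q s z‖ ≤ C * Q ^ z := by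
  refine ⟨Real.exp (|s.re| * max |Real.log (qn Q x)| |Real.log (1 - Q)⁻¹|), fun z hxz => ?_⟩
  have hlog : -(s.re * Real.log (qn Q z)) ≤
      |s.re| * max |Real.log (qn Q x)| |Real.log (1 - Q)⁻¹| :=
    calc -(s.re * Real.log (qn Q z)) ≤ |s.re| * |Real.log (qn Q z)| :=
          (neg_le_abs _).trans (abs_mul _ _).le
      _ ≤ _ := mul_le_mul_of_nonneg_left (abs_log_qn_le hQ0 hQ1 hx hxz) (abs_nonneg _)
  rw [qzetaTerm, norm_div, norm_rpowC, Complex.norm_real, Real.norm_of_nonneg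
    (Real.rpow_nonneg hQ0.le z), div_eq_mul_inv, ← Real.exp_neg, mul_comm]
  exact mul_le_mul_of_nonneg_right (Real.exp_le_exp.mpr hlog) (Real.rpow_nonneg hQ0.le z)

lemma summable_qzetaTerm {Q : ℝ} (hQ0 : 0 < Q) (hQ1 : Q < 1) (s : ℂ) {x : ℝ} (hx : 0 < x) :
    Summable fun p : ℕ × ℕ => qzetaTerm Q s (p.1 + p.2 + x) := by
  obtain ⟨C, hC⟩ := exists_norm_qzetaTerm_le hQ0 hQ1 s hx
  have hgeom := summable_geometric_of_lt_one hQ0.le hQ1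
  have hQpow : ∀ k : ℕ, 0 ≤ Q ^ k := fun k => pow_nonneg hQ0.le k
  refine Summable.of_norm_bounded
    ((hgeom.mul_of_nonneg hgeom hQpow hQpow).mul_left (C * Q ^ x)) fun p => ?_
  calc ‖qzetaTerm Q s (p.1 + p.2 + x)‖ ≤ C * Q ^ ((p.1 : ℝ) + p.2 + x) :=
        hC _ (le_add_of_nonneg_left (by positivity))
    _ = C * Q ^ x * (Q ^ p.1 * Q ^ p.2) := by
      rw [Real.rpow_add hQ0, Real.rpow_add hQ0, Real.rpow_natCast, Real.rpow_natCast]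
      ring

lemma Summable.tsum_eq_sum_residues {E : Type*} [NormedAddCommGroup E] [CompleteSpace E]
    {f : ℕ × ℕ → E} (hf : Summable f) {n : ℕ} [NeZero n] :
    ∑' p, f p = ∑ i ∈ range n, ∑ j ∈ range n, ∑' p : ℕ × ℕ, f (n * p.1 + i, n * p.2 + j) := by
  let e : (Fin n × Fin n) × (ℕ × ℕ) ≃ ℕ × ℕ :=
    (Equiv.prodComm _ _).trans <| (Equiv.prodProdProdComm ℕ ℕ (Fin n) (Fin n)).trans <|
      (Equiv.prodCongr (Nat.divModEquiv n) (Nat.divModEquiv n)).symm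
  have he : ∀ y, e y = (n * y.2.1 + y.1.1, n * y.2.2 + y.1.2) := fun _ => by
    simp [e, mul_comm]
  have hfe : Summable fun y => f (e y) := e.summable_iff.mpr hf
  rw [← e.tsum_eq f, hfe.tsum_prod' hfe.prod_factor, tsum_fintype, Fintype.sum_prod_type,
    ← Fin.sum_univ_eq_sum_range]
  refine Finset.sum_congr rfl fun i _ => ?_
  rw [← Fin.sum_univ_eq_sum_range (fun j => ∑' p : ℕ × ℕ, f (n * p.1 + i, n * p.2 + j))]
  simp only [he]

/-- Distribution relation for the double q-zeta function:
`[n]_q^{-s}·Σ_{m=0}^{n-1} Σ_{k=0}^{n-1} ζ_{q^n,2}(s, x+(k+m)/n) = ζ_{q,2}(s, n·x)`. -/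
theorem zeta2_distribution (q : ℝ) (hq0 : 0 < q) (hq1 : q < 1)
    (n : ℕ) (hn : 1 ≤ n) (x : ℝ) (hx : 0 < x) (s : ℂ) :
    rpowC (qn q (n : ℝ)) (-s)
        * ∑ m ∈ range n, ∑ k ∈ range n, zeta2 (q ^ n) s (x + ((k : ℝ) + (m : ℝ)) / (n : ℝ))
      = zeta2 q s ((n : ℝ) * x) := by
  have hn0 : n ≠ 0 := Nat.one_le_iff_ne_zero.mp hn
  have : NeZero n := ⟨hn0⟩
  have hnx : (0 : ℝ) < n * x := mul_pos (Nat.cast_pos.mpr hn) hx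
  have hterm : ∀ (p : ℕ × ℕ) (m k : ℕ),
      qzetaTerm q s (((n * p.1 + m : ℕ) : ℝ) + ((n * p.2 + k : ℕ) : ℝ) + n * x)
        = rpowC (qn q n) (-s) * qzetaTerm (q ^ n) s (p.1 + p.2 + (x + (k + m) / n)) := by
    intro p m k
    rw [← qzetaTerm_natCast_mul hq0 hq1 hn0 s (by positivity)]
    congr 1
    field_simp
    push_cast
    ring
  rw [zeta2_eq_tsum_qzetaTerm, (summable_qzetaTerm hq0 hq1 s hnx).tsum_eq_sum_residues (n := n),
    Finset.mul_sum]
  simp only [hterm, tsum_mul_left, Finset.mul_sum, zeta2_eq_tsum_qzetaTerm]
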